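/- arXiv:2003.14193 — 8 statements merged into one kernel-verified Lean document; each statement's English description precedes it below -/
import Mathlib

section
/- Let G be a Hom-group. If an element g ∈ G satisfies g·g = α(g), then g = 1. -/
/-- A Hom-group: a set with binary operation `op`, bijective multiplicative
twisting map `al` satisfying Hom-associativity, unit and two-sided inverses. -/
structure HomGroup (G : Type*) where
  op : G → G → G
  al : G → G
  one : G
  inv : G → G
  al_bij : Function.Bijective al
  al_op : ∀ g h, al (op g h) = op (al g) (al h)
  assoc : ∀ g h k, op (al g) (op h k) = op (op g h) (al k)
  op_one : ∀ g, op g one = al g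
  one_op : ∀ g, op one g = al g
  op_inv : ∀ g, op g (inv g) = one
  inv_op : ∀ g, op (inv g) g = one

/-- A Hom-monoid: Hom-semigroup with a (two-sided Hom-)unit. -/
structure HomMonoid (G : Type*) where
  op : G → G → G
  al : G → G
  one : G
  al_bij : Function.Bijective al
  al_op : ∀ g h, al (op g h) = op (al g) (al h)
  assoc : ∀ g h k, op (al g) (op h k) = op (op g h) (al k)
  op_one : ∀ g, op g one = al g
  one_op : ∀ g, op one g = al g

/-- A Hom-semigroup. -/
structure HomSemigroup (G : Type*) where
  op : G → G → G
  al : G → G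
  al_bij : Function.Bijective al
  al_op : ∀ g h, al (op g h) = op (al g) (al h)
  assoc : ∀ g h k, op (al g) (op h k) = op (op g h) (al k)

/-- `S` is a Hom-subgroup of the Hom-group `G0`: nonempty, closed under the
product and under `al` (with `al` restricting to a bijection of `S`), and
`(S, al|_S)` is itself a Hom-group, i.e. it has a unit and inverses. -/
structure IsHomSubgroup {G : Type*} (G0 : HomGroup G) (S : Set G) : Prop where
  nonempty : S.Nonempty
  op_mem : ∀ a ∈ S, ∀ b ∈ S, G0.op a b ∈ S
  al_mem : ∀ a ∈ S, G0.al a ∈ S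
  al_surjOn : ∀ a ∈ S, ∃ b ∈ S, G0.al b = a
  exists_unit : ∃ e ∈ S, (∀ a ∈ S, G0.op a e = G0.al a ∧ G0.op e a = G0.al a) ∧
    ∀ a ∈ S, ∃ b ∈ S, G0.op a b = e ∧ G0.op b a = e

/-- The left Hom-coset `aS`. -/
def leftCoset {G : Type*} (G0 : HomGroup G) (a : G) (S : Set G) : Set G :=
  {x | ∃ h ∈ S, x = G0.op a h}

/-- The right Hom-coset `Sa`. -/
def rightCoset {G : Type*} (G0 : HomGroup G) (a : G) (S : Set G) : Set G :=
  {x | ∃ h ∈ S, x = G0.op h a}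



private theorem homgroup_cancel_left {G : Type*} (G0 : HomGroup G) (a x y : G)
    (h : G0.op a x = G0.op a y) : x = y := by
  have h2 : G0.al (G0.al x) = G0.al (G0.al y) := by
    have hx : G0.op (G0.al (G0.inv a)) (G0.op a x) = G0.al (G0.al x) := by
      rw [G0.assoc, G0.inv_op, G0.one_op]
    have hy : G0.op (G0.al (G0.inv a)) (G0.op a y) = G0.al (G0.al y) := by
      rw [G0.assoc, G0.inv_op, G0.one_op]
    rw [← hx, ← hy, h]
  exact G0.al_bij.1 (G0.al_bij.1 h2)

private theorem homgroup_al_one {G : Type*} (G0 : HomGroup G) :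
    G0.al G0.one = G0.one := by
  apply homgroup_cancel_left G0 (G0.al G0.one)
  have h1 : G0.al (G0.op G0.one G0.one) = G0.op (G0.al G0.one) (G0.al G0.one) :=
    G0.al_op _ _
  rw [G0.op_one] at h1
  rw [← h1, G0.op_one]

/-- In a Hom-group, if `g·g = α(g)` then `g = 1`. -/
theorem eq_one_of_idempotent {G : Type*} (G0 : HomGroup G) (g : G)
    (h : G0.op g g = G0.al g) : g = G0.one := by
  have key : G0.op (G0.al (G0.inv g)) (G0.op g g) = G0.al (G0.al g) := by
    rw [G0.assoc, G0.inv_op, G0.one_op]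
  rw [h, ← G0.al_op, G0.inv_op, homgroup_al_one] at key
  have h1 : G0.al g = G0.al G0.one := by
    apply G0.al_bij.1
    rw [← key, homgroup_al_one, homgroup_al_one]
  exact G0.al_bij.1 h1
end

section
/- In a Hom-group, the left and right cancellation laws hold: if gh = gk or hg = kg, then h = k. -/
/-- Left and right cancellation laws in a Hom-group. -/
theorem homGroup_cancel {G : Type*} (G0 : HomGroup G) (g h k : G) :
    (G0.op g h = G0.op g k → h = k) ∧ (G0.op h g = G0.op k g → h = k) := by
  have inj := G0.al_bij.injective
  constructor
  · intro e
    have h1 : G0.al (G0.al h) = G0.al (G0.al k) := by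
      have a1 : G0.op (G0.al (G0.inv g)) (G0.op g h) = G0.al (G0.al h) := by
        rw [G0.assoc, G0.inv_op, G0.one_op]
      have a2 : G0.op (G0.al (G0.inv g)) (G0.op g k) = G0.al (G0.al k) := by
        rw [G0.assoc, G0.inv_op, G0.one_op]
      rw [← a1, ← a2, e]
    exact inj (inj h1)
  · intro e
    have h1 : G0.al (G0.al h) = G0.al (G0.al k) := by
      have a1 : G0.op (G0.op h g) (G0.al (G0.inv g)) = G0.al (G0.al h) := by
        rw [← G0.assoc, G0.op_inv, G0.op_one]
      have a2 : G0.op (G0.op k g) (G0.al (G0.inv g)) = G0.al (G0.al k) := by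
        rw [← G0.assoc, G0.op_inv, G0.op_one]
      rw [← a1, ← a2, e]
    exact inj (inj h1)
end

section
/- A Hom-semigroup G is a Hom-group if and only if: (1) there exists 1 ∈ G with 1·g = α(g) for all g and α(1) = 1 (left unit), and (2) for each g ∈ G there exists g⁻¹ ∈ G with g⁻¹·g = 1 (left inverse). In particular, a left unit with left inverses is automatically a two-sided unit with two-sided inverses. -/
/-- Classical fact: an associative operation with a left unit and left
inverses has a two-sided unit and two-sided inverses. -/
lemma leftGroup_aux {G : Type*} (m : G → G → G) (e : G)
    (hassoc : ∀ g h k, m (m g h) k = m g (m h k))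
    (hone : ∀ g, m e g = g)
    (hinv : ∀ g, ∃ h, m h g = e) :
    (∀ g, m g e = g) ∧ (∀ g, ∃ h, m g h = e ∧ m h g = e) := by
  have inv2 : ∀ g, ∃ h, m g h = e ∧ m h g = e := by
    intro g
    obtain ⟨h, hh⟩ := hinv g
    obtain ⟨k, hk⟩ := hinv h
    have ghe : m g h = e := by
      calc m g h = m e (m g h) := (hone _).symm
        _ = m (m k h) (m g h) := by rw [hk]
        _ = m k (m h (m g h)) := hassoc k h (m g h)
        _ = m k (m (m h g) h) := by rw [hassoc h g h]
        _ = m k (m e h) := by rw [hh]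
        _ = m k h := by rw [hone]
        _ = e := hk
    exact ⟨h, ghe, hh⟩
  refine ⟨fun g => ?_, inv2⟩
  obtain ⟨h, hgh, hhg⟩ := inv2 g
  calc m g e = m g (m h g) := by rw [hhg]
    _ = m (m g h) g := (hassoc g h g).symm
    _ = g := by rw [hgh, hone]

/-- A Hom-semigroup is a Hom-group (has a two-sided unit and two-sided
inverses) iff it has a left unit `e` with `α(e) = e` and left inverses. -/
theorem homGroup_iff_left_unit_left_inv {G : Type*} (S : HomSemigroup G) :
    (∃ e : G, (∀ g, S.op g e = S.al g) ∧ (∀ g, S.op e g = S.al g) ∧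
        ∀ g, ∃ h, S.op g h = e ∧ S.op h g = e) ↔
      (∃ e : G, (∀ g, S.op e g = S.al g) ∧ S.al e = e ∧ ∀ g, ∃ h, S.op h g = e) := by
  have inj := S.al_bij.1
  constructor
  · rintro ⟨e, h1, h2, h3⟩
    obtain ⟨h, _, hh2⟩ := h3 (S.al e)
    have e1 : S.op (S.al h) (S.al (S.al e)) = S.al e := by
      rw [← S.al_op, hh2]
    have e2 : S.op (S.al h) (S.al (S.al e)) = S.al (S.al e) := by
      have h4 : S.al (S.al e) = S.op (S.al e) e := (h1 _).symm
      calc S.op (S.al h) (S.al (S.al e)) = S.op (S.al h) (S.op (S.al e) e) := by rw [← h4]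
        _ = S.op (S.op h (S.al e)) (S.al e) := S.assoc h (S.al e) e
        _ = S.op e (S.al e) := by rw [hh2]
        _ = S.al (S.al e) := h2 _
    have hae : S.al e = e := (inj (e1.symm.trans e2)).symm
    exact ⟨e, h2, hae, fun g => ⟨(h3 g).choose, (h3 g).choose_spec.2⟩⟩
  · rintro ⟨e, h2, hae, h3⟩
    set β := Equiv.ofBijective S.al S.al_bij with hβ
    have hf1 : ∀ x, S.al (β.symm x) = x := fun x => β.apply_symm_apply x
    have hf2 : ∀ x, β.symm (S.al x) = x := fun x => β.symm_apply_apply x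
    set m : G → G → G := fun g h => β.symm (S.op g h) with hm
    have alm : ∀ g h, S.al (m g h) = S.op g h := fun g h => hf1 _
    have massoc : ∀ g h k, m (m g h) k = m g (m h k) := by
      intro g h k
      apply inj; apply inj
      simp only [alm, S.al_op]
      exact (S.assoc g h k).symm
    have mone : ∀ g, m e g = g := by
      intro g
      show β.symm (S.op e g) = g
      rw [h2 g]; exact hf2 g
    have minv : ∀ g, ∃ h, m h g = e := by
      intro g
      obtain ⟨h, hh⟩ := h3 g
      refine ⟨h, ?_⟩
      show β.symm (S.op h g) = e
      rw [hh]; nth_rewrite 1 [← hae]; exact hf2 e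
    obtain ⟨mright, minv2⟩ := leftGroup_aux m e massoc mone minv
    refine ⟨e, fun g => ?_, fun g => h2 g, fun g => ?_⟩
    · have := congrArg S.al (mright g)
      rwa [alm] at this
    · obtain ⟨h, hgh, hhg⟩ := minv2 g
      have a1 := congrArg S.al hgh
      have a2 := congrArg S.al hhg
      rw [alm, hae] at a1 a2
      exact ⟨h, a1, a2⟩
end

section
/- A nonempty finite Hom-semigroup G is a Hom-group if and only if G satisfies both the left and right cancellation laws. -/
/-- A nonempty finite Hom-semigroup is a Hom-group iff both cancellation laws hold. -/
theorem finite_homGroup_iff_cancel {G : Type*} [Finite G] [Nonempty G] (S : HomSemigroup G) :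
    (∃ e : G, (∀ g, S.op g e = S.al g) ∧ (∀ g, S.op e g = S.al g) ∧
        ∀ g, ∃ h, S.op g h = e ∧ S.op h g = e) ↔
      ((∀ g h k : G, S.op g h = S.op g k → h = k) ∧
        (∀ g h k : G, S.op h g = S.op k g → h = k)) := by
  constructor
  · rintro ⟨e, he1, he2, hinv⟩
    constructor
    · intro g h k hgh
      obtain ⟨g', _, hg2⟩ := hinv g
      have h1 : S.op (S.al g') (S.op g h) = S.al (S.al h) := by
        rw [S.assoc, hg2, he2]
      have h2 : S.op (S.al g') (S.op g k) = S.al (S.al k) := by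
        rw [S.assoc, hg2, he2]
      rw [hgh, h2] at h1
      exact (S.al_bij.1 (S.al_bij.1 h1)).symm
    · intro g h k hgh
      obtain ⟨g', hg1, _⟩ := hinv g
      have h1 : S.op (S.op h g) (S.al g') = S.al (S.al h) := by
        rw [← S.assoc, hg1, he1]
      have h2 : S.op (S.op k g) (S.al g') = S.al (S.al k) := by
        rw [← S.assoc, hg1, he1]
      rw [hgh, h2] at h1
      exact (S.al_bij.1 (S.al_bij.1 h1)).symm
  · rintro ⟨hl, hr⟩
    have Lsurj : ∀ g : G, Function.Surjective (S.op g) :=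
      fun g => Finite.injective_iff_surjective.mp (fun x y => hl g x y)
    have Rsurj : ∀ g : G, Function.Surjective (fun x => S.op x g) :=
      fun g => Finite.injective_iff_surjective.mp (fun x y h => hr g x y h)
    obtain ⟨a⟩ := ‹Nonempty G›
    obtain ⟨e, he⟩ := Rsurj a (S.al a)
    obtain ⟨f, hf⟩ := Lsurj a (S.al a)
    simp only [] at he
    -- left unit: α e · x = α x
    have hleft : ∀ x, S.op (S.al e) x = S.al x := by
      intro x
      obtain ⟨k, hk⟩ := Lsurj a x
      rw [← hk, S.assoc, he, ← S.al_op]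
    have hright : ∀ x, S.op x (S.al f) = S.al x := by
      intro x
      obtain ⟨k, hk⟩ := Rsurj a x
      simp only [] at hk
      rw [← hk, ← S.assoc, hf, ← S.al_op]
    have hef : S.al e = S.al f := by
      have h1 := hleft (S.al f)
      have h2 := hright (S.al e)
      have := h2.symm.trans h1
      exact S.al_bij.1 this
    have hright' : ∀ x, S.op x (S.al e) = S.al x := by
      intro x; rw [hef]; exact hright x
    refine ⟨S.al e, hright', hleft, fun g => ?_⟩
    obtain ⟨h, hh⟩ := Lsurj g (S.al e)
    obtain ⟨h', hh'⟩ := Rsurj g (S.al e)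
    simp only [] at hh'
    have key : S.op (S.al h') (S.op g h) = S.op (S.op h' g) (S.al h) := S.assoc h' g h
    rw [hh, hh', hright', hleft] at key
    have : h' = h := S.al_bij.1 (S.al_bij.1 key)
    exact ⟨h, hh, this ▸ hh'⟩
end

section
/- Let H be a Hom-subgroup of a Hom-group G and a, b ∈ G. Then the following are equivalent: (1) aH = bH; (2) aH ∩ bH ≠ ∅; (3) a⁻¹b ∈ H; (4) α(b) ∈ aH; (5) α(a)H = α(b)H. -/
section Aux
variable {G : Type*} (G0 : HomGroup G)

theorem HG.lcore (g h : G) :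
    G0.op (G0.al (G0.inv g)) (G0.op g h) = G0.al (G0.al h) := by
  rw [G0.assoc, G0.inv_op, G0.one_op]

theorem HG.rcore (g h : G) :
    G0.op (G0.op h g) (G0.al (G0.inv g)) = G0.al (G0.al h) := by
  rw [← G0.assoc, G0.op_inv, G0.op_one]

theorem HG.al_inj : Function.Injective G0.al := G0.al_bij.1

theorem HG.lcancel {g h k : G} (e : G0.op g h = G0.op g k) : h = k := by
  apply HG.al_inj G0; apply HG.al_inj G0
  rw [← HG.lcore G0 g h, e, HG.lcore]

variable {H : Set G} (hH : IsHomSubgroup G0 H)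
include hH

theorem HG.one_mem : G0.one ∈ H := by
  obtain ⟨e, heH, hu, _⟩ := hH.exists_unit
  obtain ⟨x, hx⟩ := hH.nonempty
  have he : e = G0.one :=
    HG.lcancel G0 (g := x) (by rw [(hu x hx).1, G0.op_one])
  rwa [he] at heH

theorem HG.inv_mem {x : G} (hx : x ∈ H) : G0.inv x ∈ H := by
  obtain ⟨e, heH, hu, hi⟩ := hH.exists_unit
  obtain ⟨y, hy⟩ := hH.nonempty
  have he : e = G0.one :=
    HG.lcancel G0 (g := y) (by rw [(hu y hy).1, G0.op_one])
  obtain ⟨z, hzH, hz1, _⟩ := hi x hx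
  have : G0.op x z = G0.op x (G0.inv x) := by rw [hz1, he, G0.op_inv]
  rw [← HG.lcancel G0 this]; exact hzH

theorem HG.al_pre {x : G} (hx : G0.al x ∈ H) : x ∈ H := by
  obtain ⟨y, hyH, hy⟩ := hH.al_surjOn _ hx
  rwa [← HG.al_inj G0 hy]

theorem HG.al_mem_self {a : G} : G0.al a ∈ leftCoset G0 a H :=
  ⟨G0.one, HG.one_mem G0 hH, (G0.op_one a).symm⟩

theorem HG.inter_to_mem {a b : G}
    (hne : (leftCoset G0 a H ∩ leftCoset G0 b H).Nonempty) :
    G0.op (G0.inv a) b ∈ H := by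
  obtain ⟨x, ⟨h1, h1H, hx1⟩, ⟨h2, h2H, hx2⟩⟩ := hne
  set c := G0.op (G0.inv a) b with hc
  have e1 : G0.op c (G0.al h2) = G0.al (G0.al h1) := by
    rw [hc, ← G0.assoc, ← hx2, hx1, HG.lcore]
  have e2 : G0.op (G0.op c (G0.al h2)) (G0.al (G0.inv (G0.al h2)))
      = G0.al (G0.al c) := HG.rcore G0 _ _
  have hmem : G0.al (G0.al c) ∈ H := by
    rw [← e2, e1]
    exact hH.op_mem _ (hH.al_mem _ (hH.al_mem _ h1H)) _
      (hH.al_mem _ (HG.inv_mem G0 hH (hH.al_mem _ h2H)))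
  exact HG.al_pre G0 hH (HG.al_pre G0 hH hmem)

theorem HG.mem_to_coset {a b : G} (hab : G0.op (G0.inv a) b ∈ H) :
    G0.al b ∈ leftCoset G0 a H := by
  obtain ⟨h1, h1H, hh1⟩ := hH.al_surjOn _ hab
  refine ⟨h1, h1H, HG.al_inj G0 ?_⟩
  rw [G0.al_op, hh1, G0.assoc, G0.op_inv, G0.one_op]

theorem HG.coset_subset {a b : G} (hab : G0.op (G0.inv a) b ∈ H) :
    leftCoset G0 b H ⊆ leftCoset G0 a H := by
  rintro x ⟨h, hhH, rfl⟩
  set c := G0.op (G0.inv a) b with hc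
  have hch : G0.op c (G0.al h) ∈ H := hH.op_mem _ hab _ (hH.al_mem _ hhH)
  obtain ⟨h', h'H, hh'⟩ := hH.al_surjOn _ hch
  obtain ⟨h'', h''H, hh''⟩ := hH.al_surjOn _ h'H
  refine ⟨h'', h''H, HG.al_inj G0 (HG.al_inj G0 ?_)⟩
  calc G0.al (G0.al (G0.op b h))
      = G0.op (G0.op (G0.al a) c) (G0.al (G0.al h)) := by
        rw [hc, G0.assoc a, G0.op_inv, G0.one_op, G0.al_op, G0.al_op]
    _ = G0.op (G0.al (G0.al a)) (G0.op c (G0.al h)) := (G0.assoc _ _ _).symm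
    _ = G0.al (G0.al (G0.op a h'')) := by
        rw [← hh', ← hh'', ← G0.al_op, ← G0.al_op]

theorem HG.al_coset (a : G) :
    leftCoset G0 (G0.al a) H = G0.al '' leftCoset G0 a H := by
  ext x
  constructor
  · rintro ⟨h, hh, rfl⟩
    obtain ⟨h', h'H, rfl⟩ := hH.al_surjOn _ hh
    exact ⟨G0.op a h', ⟨h', h'H, rfl⟩, G0.al_op a h'⟩
  · rintro ⟨y, ⟨h, hh, rfl⟩, rfl⟩
    exact ⟨G0.al h, hH.al_mem _ hh, G0.al_op a h⟩

end Aux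

/-- Equivalent descriptions of equality of left Hom-cosets. -/
theorem homCoset_eq_iffs {G : Type*} (G0 : HomGroup G) (H : Set G)
    (hH : IsHomSubgroup G0 H) (a b : G) :
    (leftCoset G0 a H = leftCoset G0 b H ↔ (leftCoset G0 a H ∩ leftCoset G0 b H).Nonempty) ∧
    (leftCoset G0 a H = leftCoset G0 b H ↔ G0.op (G0.inv a) b ∈ H) ∧
    (leftCoset G0 a H = leftCoset G0 b H ↔ G0.al b ∈ leftCoset G0 a H) ∧
    (leftCoset G0 a H = leftCoset G0 b H ↔
      leftCoset G0 (G0.al a) H = leftCoset G0 (G0.al b) H) := by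
  have i12 : leftCoset G0 a H = leftCoset G0 b H ↔
      (leftCoset G0 a H ∩ leftCoset G0 b H).Nonempty := by
    constructor
    · intro h
      refine ⟨G0.al a, HG.al_mem_self G0 hH, ?_⟩
      rw [← h]; exact HG.al_mem_self G0 hH
    · intro hne
      have h3 := HG.inter_to_mem G0 hH hne
      have h3' := HG.inter_to_mem G0 hH (by rwa [Set.inter_comm] at hne)
      exact Set.Subset.antisymm (HG.coset_subset G0 hH h3') (HG.coset_subset G0 hH h3)
  have i13 : leftCoset G0 a H = leftCoset G0 b H ↔ G0.op (G0.inv a) b ∈ H := by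
    constructor
    · intro h; exact HG.inter_to_mem G0 hH (i12.mp h)
    · intro h3
      exact i12.mpr ⟨G0.al b, HG.mem_to_coset G0 hH h3, HG.al_mem_self G0 hH⟩
  have i14 : leftCoset G0 a H = leftCoset G0 b H ↔ G0.al b ∈ leftCoset G0 a H := by
    constructor
    · intro h; exact HG.mem_to_coset G0 hH (i13.mp h)
    · intro h4; exact i12.mpr ⟨G0.al b, h4, HG.al_mem_self G0 hH⟩
  have i15 : leftCoset G0 a H = leftCoset G0 b H ↔
      leftCoset G0 (G0.al a) H = leftCoset G0 (G0.al b) H := by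
    rw [HG.al_coset G0 hH, HG.al_coset G0 hH]
    exact ⟨fun h => h ▸ rfl, fun h => Set.image_injective.mpr (HG.al_inj G0) h⟩
  exact ⟨i12, i13, i14, i15⟩
end

section
/- The center Z(G) = {h ∈ G : gh = hg for all g ∈ G} of a Hom-group G is a Hom-normal subgroup of G. -/
/-- The center of a Hom-group is a Hom-normal subgroup. -/
theorem center_homNormal {G : Type*} (G0 : HomGroup G) :
    IsHomSubgroup G0 {h : G | ∀ g : G, G0.op g h = G0.op h g} ∧
      ∀ g : G, leftCoset G0 g {h : G | ∀ g' : G, G0.op g' h = G0.op h g'} =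
        rightCoset G0 g {h : G | ∀ g' : G, G0.op g' h = G0.op h g'} := by
  have hinj := G0.al_bij.1
  have hsurj := G0.al_bij.2
  have one_mem : G0.one ∈ {h : G | ∀ g : G, G0.op g h = G0.op h g} := fun g => by
    rw [G0.op_one, G0.one_op]
  have cancel_right : ∀ a x y : G, G0.op x a = G0.op y a → x = y := by
    intro a x y h
    have hx := G0.assoc x a (G0.inv a)
    have hy := G0.assoc y a (G0.inv a)
    rw [G0.op_inv, G0.op_one] at hx hy
    rw [h] at hx
    exact hinj (hinj (hx.trans hy.symm))
  have inv_mem : ∀ a ∈ {h : G | ∀ g : G, G0.op g h = G0.op h g},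
      G0.inv a ∈ {h : G | ∀ g : G, G0.op g h = G0.op h g} := by
    intro a ha g
    apply cancel_right (G0.al a)
    rw [← G0.assoc g (G0.inv a) a, G0.inv_op, G0.op_one,
        ← G0.assoc (G0.inv a) g a, ha g, G0.assoc (G0.inv a) a g, G0.inv_op, G0.one_op]
  constructor
  · refine ⟨⟨G0.one, one_mem⟩, ?_, ?_, ?_, ?_⟩
    · intro a ha b hb g
      obtain ⟨g', rfl⟩ := hsurj g
      rw [G0.assoc g' a b, ha g', ← G0.assoc a g' b, hb g', G0.assoc a b g']
    · intro a ha g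
      obtain ⟨g', rfl⟩ := hsurj g
      rw [← G0.al_op, ← G0.al_op, ha g']
    · intro a ha
      obtain ⟨b, rfl⟩ := hsurj a
      refine ⟨b, ?_, rfl⟩
      intro g
      apply hinj
      rw [G0.al_op, G0.al_op]
      exact ha (G0.al g)
    · exact ⟨G0.one, one_mem, fun a _ => ⟨G0.op_one a, G0.one_op a⟩,
        fun a ha => ⟨G0.inv a, inv_mem a ha, G0.op_inv a, G0.inv_op a⟩⟩
  · intro g
    ext x
    simp only [leftCoset, rightCoset, Set.mem_setOf_eq]
    constructor
    · rintro ⟨h, hh, rfl⟩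
      exact ⟨h, hh, hh g⟩
    · rintro ⟨h, hh, rfl⟩
      exact ⟨h, hh, (hh g).symm⟩
end

section
/- If N is a Hom-normal subgroup of a Hom-group (G, α), then the set G/N of left Hom-cosets is a Hom-group under the operations (aN)(bN) = (ab)N and twisting map α̃(aN) = α(a)N, with unit element N; in particular these operations are well-defined on cosets. -/
namespace HQAux

variable {G : Type*}

theorem cancel_left (G0 : HomGroup G) (g : G) {a b : G}
    (h : G0.op g a = G0.op g b) : a = b := by
  have h1 := G0.assoc (G0.inv g) g a
  have h2 := G0.assoc (G0.inv g) g b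
  rw [G0.inv_op, G0.one_op] at h1 h2
  have h3 : G0.al (G0.al a) = G0.al (G0.al b) := by rw [← h1, ← h2, h]
  exact G0.al_bij.1 (G0.al_bij.1 h3)

theorem al_one (G0 : HomGroup G) : G0.al G0.one = G0.one := by
  apply cancel_left G0 (G0.al G0.one)
  rw [G0.op_one, ← G0.al_op, G0.one_op]

theorem one_mem (G0 : HomGroup G) {N : Set G} (hN : IsHomSubgroup G0 N) :
    G0.one ∈ N := by
  obtain ⟨e, heN, hunit, _⟩ := hN.exists_unit
  have hee : G0.op e e = G0.al e := (hunit e heN).1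
  have h := G0.assoc e e (G0.inv e)
  rw [G0.op_inv, G0.op_one, hee, ← G0.al_op, G0.op_inv] at h
  have he1 : e = G0.one := by
    have h4 := G0.al_bij.1 h
    apply G0.al_bij.1
    rw [h4, al_one]
  rwa [← he1]

theorem inv_mem (G0 : HomGroup G) {N : Set G} (hN : IsHomSubgroup G0 N)
    (n : G) (hn : n ∈ N) :
    ∃ m ∈ N, G0.op n m = G0.one ∧ G0.op m n = G0.one := by
  obtain ⟨e, heN, hunit, hinv⟩ := hN.exists_unit
  have hee : G0.op e e = G0.al e := (hunit e heN).1
  have h := G0.assoc e e (G0.inv e)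
  rw [G0.op_inv, G0.op_one, hee, ← G0.al_op, G0.op_inv] at h
  have he1 : e = G0.one := by
    have h4 := G0.al_bij.1 h
    apply G0.al_bij.1
    rw [h4, al_one]
  obtain ⟨m, hm, h1, h2⟩ := hinv n hn
  rw [he1] at h1 h2
  exact ⟨m, hm, h1, h2⟩

/-- The relation characterizing equality of left cosets. -/
def rel (G0 : HomGroup G) (N : Set G) (a b : G) : Prop :=
  ∃ n ∈ N, G0.al a = G0.op b n

theorem rel_symm (G0 : HomGroup G) {N : Set G} (hN : IsHomSubgroup G0 N)
    {a b : G} (h : rel G0 N a b) : rel G0 N b a := by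
  obtain ⟨n, hn, hab⟩ := h
  obtain ⟨m, hm, hnm, _⟩ := inv_mem G0 hN n hn
  refine ⟨m, hm, ?_⟩
  have h1 := G0.assoc b n m
  rw [hnm, G0.op_one, ← hab, ← G0.al_op] at h1
  exact G0.al_bij.1 h1

theorem coset_subset (G0 : HomGroup G) {N : Set G} (hN : IsHomSubgroup G0 N)
    {a b : G} (h : rel G0 N a b) : leftCoset G0 a N ⊆ leftCoset G0 b N := by
  obtain ⟨n, hn, hab⟩ := h
  rintro x ⟨m, hm, rfl⟩
  obtain ⟨k, hk, hkk⟩ := hN.al_surjOn _ (hN.op_mem n hn m hm)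
  refine ⟨k, hk, G0.al_bij.1 ?_⟩
  calc G0.al (G0.op a m) = G0.op (G0.al a) (G0.al m) := G0.al_op a m
    _ = G0.op (G0.op b n) (G0.al m) := by rw [hab]
    _ = G0.op (G0.al b) (G0.op n m) := (G0.assoc b n m).symm
    _ = G0.op (G0.al b) (G0.al k) := by rw [hkk]
    _ = G0.al (G0.op b k) := (G0.al_op b k).symm

theorem coset_eq_iff (G0 : HomGroup G) {N : Set G} (hN : IsHomSubgroup G0 N)
    {a b : G} : leftCoset G0 a N = leftCoset G0 b N ↔ rel G0 N a b := by
  constructor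
  · intro h
    have h1 : G0.al a ∈ leftCoset G0 b N := by
      rw [← h]; exact ⟨G0.one, one_mem G0 hN, (G0.op_one a).symm⟩
    exact h1
  · intro h
    exact Set.Subset.antisymm (coset_subset G0 hN h)
      (coset_subset G0 hN (rel_symm G0 hN h))

theorem rel_al (G0 : HomGroup G) {N : Set G} (hN : IsHomSubgroup G0 N)
    {a b : G} (h : rel G0 N a b) : rel G0 N (G0.al a) (G0.al b) := by
  obtain ⟨n, hn, h1⟩ := h
  exact ⟨G0.al n, hN.al_mem n hn, by rw [← G0.al_op, h1]⟩

theorem rel_al_rev (G0 : HomGroup G) {N : Set G} (hN : IsHomSubgroup G0 N)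
    {a b : G} (h : rel G0 N (G0.al a) (G0.al b)) : rel G0 N a b := by
  obtain ⟨n, hn, h1⟩ := h
  obtain ⟨m, hm, hmn⟩ := hN.al_surjOn n hn
  refine ⟨m, hm, G0.al_bij.1 ?_⟩
  rw [h1, ← hmn, G0.al_op]

theorem rel_op (G0 : HomGroup G) {N : Set G} (hN : IsHomSubgroup G0 N)
    (hnorm : ∀ g : G, leftCoset G0 g N = rightCoset G0 g N)
    {a b c d : G} (hab : rel G0 N a b) (hcd : rel G0 N c d) :
    rel G0 N (G0.op a c) (G0.op b d) := by
  obtain ⟨n, hn, h1⟩ := hab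
  obtain ⟨m, hm, h2⟩ := hcd
  have hnd : G0.op n d ∈ leftCoset G0 d N := by
    rw [hnorm d]; exact ⟨n, hn, rfl⟩
  obtain ⟨p, hp, hp2⟩ := hnd
  have had : G0.al (G0.op a d) = G0.op (G0.op b d) (G0.al p) := by
    calc G0.al (G0.op a d) = G0.op (G0.al a) (G0.al d) := G0.al_op a d
      _ = G0.op (G0.op b n) (G0.al d) := by rw [h1]
      _ = G0.op (G0.al b) (G0.op n d) := (G0.assoc b n d).symm
      _ = G0.op (G0.al b) (G0.op d p) := by rw [← hp2]
      _ = G0.op (G0.op b d) (G0.al p) := G0.assoc b d p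
  have hac : G0.al (G0.op a c) = G0.op (G0.op a d) (G0.al m) := by
    calc G0.al (G0.op a c) = G0.op (G0.al a) (G0.al c) := G0.al_op a c
      _ = G0.op (G0.al a) (G0.op d m) := by rw [h2]
      _ = G0.op (G0.op a d) (G0.al m) := G0.assoc a d m
  have h3 : G0.al (G0.op a c) ∈ leftCoset G0 (G0.op a d) N :=
    ⟨G0.al m, hN.al_mem m hm, hac⟩
  have h4 : leftCoset G0 (G0.op a d) N = leftCoset G0 (G0.op b d) N :=
    (coset_eq_iff G0 hN).2 ⟨G0.al p, hN.al_mem p hp, had⟩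
  rw [h4] at h3
  exact h3

theorem coset_op_congr (G0 : HomGroup G) {N : Set G} (hN : IsHomSubgroup G0 N)
    (hnorm : ∀ g : G, leftCoset G0 g N = rightCoset G0 g N)
    {a b c d : G} (h1 : leftCoset G0 a N = leftCoset G0 b N)
    (h2 : leftCoset G0 c N = leftCoset G0 d N) :
    leftCoset G0 (G0.op a c) N = leftCoset G0 (G0.op b d) N :=
  (coset_eq_iff G0 hN).2 (rel_op G0 hN hnorm ((coset_eq_iff G0 hN).1 h1)
    ((coset_eq_iff G0 hN).1 h2))

theorem coset_al_congr (G0 : HomGroup G) {N : Set G} (hN : IsHomSubgroup G0 N)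
    {a b : G} (h : leftCoset G0 a N = leftCoset G0 b N) :
    leftCoset G0 (G0.al a) N = leftCoset G0 (G0.al b) N :=
  (coset_eq_iff G0 hN).2 (rel_al G0 hN ((coset_eq_iff G0 hN).1 h))

theorem coset_al_congr_rev (G0 : HomGroup G) {N : Set G} (hN : IsHomSubgroup G0 N)
    {a b : G} (h : leftCoset G0 (G0.al a) N = leftCoset G0 (G0.al b) N) :
    leftCoset G0 a N = leftCoset G0 b N :=
  (coset_eq_iff G0 hN).2 (rel_al_rev G0 hN ((coset_eq_iff G0 hN).1 h))

theorem one_coset (G0 : HomGroup G) {N : Set G} (hN : IsHomSubgroup G0 N) :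
    leftCoset G0 G0.one N = N := by
  ext x
  constructor
  · rintro ⟨n, hn, rfl⟩
    rw [G0.one_op]
    exact hN.al_mem n hn
  · intro hx
    obtain ⟨n, hn, hnn⟩ := hN.al_surjOn x hx
    exact ⟨n, hn, by rw [G0.one_op, hnn]⟩

/-- The quotient type. -/
abbrev QT (G0 : HomGroup G) (N : Set G) : Type _ :=
  {T : Set G // ∃ a : G, T = leftCoset G0 a N}

def pi (G0 : HomGroup G) (N : Set G) (a : G) : QT G0 N :=
  ⟨leftCoset G0 a N, a, rfl⟩

noncomputable def rep (G0 : HomGroup G) (N : Set G) (x : QT G0 N) : G :=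
  x.2.choose

theorem rep_spec (G0 : HomGroup G) (N : Set G) (x : QT G0 N) :
    x.1 = leftCoset G0 (rep G0 N x) N := x.2.choose_spec

theorem pi_rep (G0 : HomGroup G) (N : Set G) (x : QT G0 N) :
    pi G0 N (rep G0 N x) = x := Subtype.ext (rep_spec G0 N x).symm

theorem rep_pi (G0 : HomGroup G) (N : Set G) (a : G) :
    leftCoset G0 (rep G0 N (pi G0 N a)) N = leftCoset G0 a N :=
  (rep_spec G0 N (pi G0 N a)).symm

noncomputable def qop (G0 : HomGroup G) (N : Set G) (x y : QT G0 N) : QT G0 N :=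
  pi G0 N (G0.op (rep G0 N x) (rep G0 N y))

noncomputable def qal (G0 : HomGroup G) (N : Set G) (x : QT G0 N) : QT G0 N :=
  pi G0 N (G0.al (rep G0 N x))

noncomputable def qinv (G0 : HomGroup G) (N : Set G) (x : QT G0 N) : QT G0 N :=
  pi G0 N (G0.inv (rep G0 N x))

theorem qop_pi (G0 : HomGroup G) {N : Set G} (hN : IsHomSubgroup G0 N)
    (hnorm : ∀ g : G, leftCoset G0 g N = rightCoset G0 g N) (a b : G) :
    qop G0 N (pi G0 N a) (pi G0 N b) = pi G0 N (G0.op a b) :=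
  Subtype.ext (coset_op_congr G0 hN hnorm (rep_pi G0 N a) (rep_pi G0 N b))

theorem qal_pi (G0 : HomGroup G) {N : Set G} (hN : IsHomSubgroup G0 N)
    (a : G) : qal G0 N (pi G0 N a) = pi G0 N (G0.al a) :=
  Subtype.ext (coset_al_congr G0 hN (rep_pi G0 N a))

theorem pi_congr (G0 : HomGroup G) (N : Set G) {a b : G} (h : a = b) :
    pi G0 N a = pi G0 N b := by rw [h]

theorem qop_qinv (G0 : HomGroup G) {N : Set G} (hN : IsHomSubgroup G0 N)
    (hnorm : ∀ g : G, leftCoset G0 g N = rightCoset G0 g N) (a : G) :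
    qop G0 N (pi G0 N a) (qinv G0 N (pi G0 N a)) = pi G0 N G0.one := by
  have h0 : qinv G0 N (pi G0 N a) = pi G0 N (G0.inv (rep G0 N (pi G0 N a))) := rfl
  rw [h0, qop_pi G0 hN hnorm]
  apply Subtype.ext
  show leftCoset G0 (G0.op a (G0.inv (rep G0 N (pi G0 N a)))) N
      = leftCoset G0 G0.one N
  have h1 := coset_op_congr G0 hN hnorm (rep_pi G0 N a).symm
    (rfl : leftCoset G0 (G0.inv (rep G0 N (pi G0 N a))) N = _)
  rw [h1, G0.op_inv]

theorem qinv_qop (G0 : HomGroup G) {N : Set G} (hN : IsHomSubgroup G0 N)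
    (hnorm : ∀ g : G, leftCoset G0 g N = rightCoset G0 g N) (a : G) :
    qop G0 N (qinv G0 N (pi G0 N a)) (pi G0 N a) = pi G0 N G0.one := by
  have h0 : qinv G0 N (pi G0 N a) = pi G0 N (G0.inv (rep G0 N (pi G0 N a))) := rfl
  rw [h0, qop_pi G0 hN hnorm]
  apply Subtype.ext
  show leftCoset G0 (G0.op (G0.inv (rep G0 N (pi G0 N a))) a) N
      = leftCoset G0 G0.one N
  have h1 := coset_op_congr G0 hN hnorm
    (rfl : leftCoset G0 (G0.inv (rep G0 N (pi G0 N a))) N = _) (rep_pi G0 N a).symm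
  rw [h1, G0.inv_op]

noncomputable def Qgroup (G0 : HomGroup G) {N : Set G} (hN : IsHomSubgroup G0 N)
    (hnorm : ∀ g : G, leftCoset G0 g N = rightCoset G0 g N) :
    HomGroup (QT G0 N) where
  op := qop G0 N
  al := qal G0 N
  one := pi G0 N G0.one
  inv := qinv G0 N
  al_bij := by
    constructor
    · intro x y h
      obtain ⟨a, rfl⟩ : ∃ a, x = pi G0 N a := ⟨rep G0 N x, (pi_rep G0 N x).symm⟩
      obtain ⟨b, rfl⟩ : ∃ b, y = pi G0 N b := ⟨rep G0 N y, (pi_rep G0 N y).symm⟩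
      rw [qal_pi G0 hN, qal_pi G0 hN] at h
      exact Subtype.ext (coset_al_congr_rev G0 hN (Subtype.ext_iff.1 h))
    · intro x
      obtain ⟨a, rfl⟩ : ∃ a, x = pi G0 N a := ⟨rep G0 N x, (pi_rep G0 N x).symm⟩
      obtain ⟨b, hb⟩ := G0.al_bij.2 a
      exact ⟨pi G0 N b, by rw [qal_pi G0 hN, hb]⟩
  al_op := by
    intro x y
    obtain ⟨a, rfl⟩ : ∃ a, x = pi G0 N a := ⟨rep G0 N x, (pi_rep G0 N x).symm⟩
    obtain ⟨b, rfl⟩ : ∃ b, y = pi G0 N b := ⟨rep G0 N y, (pi_rep G0 N y).symm⟩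
    rw [qop_pi G0 hN hnorm, qal_pi G0 hN, qal_pi G0 hN, qal_pi G0 hN,
      qop_pi G0 hN hnorm]
    exact pi_congr G0 N (G0.al_op a b)
  assoc := by
    intro x y z
    obtain ⟨a, rfl⟩ : ∃ a, x = pi G0 N a := ⟨rep G0 N x, (pi_rep G0 N x).symm⟩
    obtain ⟨b, rfl⟩ : ∃ b, y = pi G0 N b := ⟨rep G0 N y, (pi_rep G0 N y).symm⟩
    obtain ⟨c, rfl⟩ : ∃ c, z = pi G0 N c := ⟨rep G0 N z, (pi_rep G0 N z).symm⟩
    rw [qal_pi G0 hN, qal_pi G0 hN, qop_pi G0 hN hnorm, qop_pi G0 hN hnorm,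
      qop_pi G0 hN hnorm, qop_pi G0 hN hnorm]
    exact pi_congr G0 N (G0.assoc a b c)
  op_one := by
    intro x
    obtain ⟨a, rfl⟩ : ∃ a, x = pi G0 N a := ⟨rep G0 N x, (pi_rep G0 N x).symm⟩
    rw [qop_pi G0 hN hnorm, qal_pi G0 hN]
    exact pi_congr G0 N (G0.op_one a)
  one_op := by
    intro x
    obtain ⟨a, rfl⟩ : ∃ a, x = pi G0 N a := ⟨rep G0 N x, (pi_rep G0 N x).symm⟩
    rw [qop_pi G0 hN hnorm, qal_pi G0 hN]
    exact pi_congr G0 N (G0.one_op a)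
  op_inv := by
    intro x
    obtain ⟨a, rfl⟩ : ∃ a, x = pi G0 N a := ⟨rep G0 N x, (pi_rep G0 N x).symm⟩
    exact qop_qinv G0 hN hnorm a
  inv_op := by
    intro x
    obtain ⟨a, rfl⟩ : ∃ a, x = pi G0 N a := ⟨rep G0 N x, (pi_rep G0 N x).symm⟩
    exact qinv_qop G0 hN hnorm a

end HQAux


/-- The quotient of a Hom-group by a Hom-normal subgroup is a Hom-group with
well-defined operations `(aN)(bN) = (ab)N`, `α̃(aN) = α(a)N` and unit `N`. -/
theorem homQuotient_is_homGroup {G : Type*} (G0 : HomGroup G) (N : Set G)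
    (hN : IsHomSubgroup G0 N)
    (hnorm : ∀ g : G, leftCoset G0 g N = rightCoset G0 g N) :
    (∀ a b c d : G, leftCoset G0 a N = leftCoset G0 b N →
        leftCoset G0 c N = leftCoset G0 d N →
        leftCoset G0 (G0.op a c) N = leftCoset G0 (G0.op b d) N) ∧
    (∀ a b : G, leftCoset G0 a N = leftCoset G0 b N →
        leftCoset G0 (G0.al a) N = leftCoset G0 (G0.al b) N) ∧
    ∃ Q : HomGroup {T : Set G // ∃ a : G, T = leftCoset G0 a N},
      (∀ a b : G, Q.op ⟨leftCoset G0 a N, a, rfl⟩ ⟨leftCoset G0 b N, b, rfl⟩ =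
          ⟨leftCoset G0 (G0.op a b) N, G0.op a b, rfl⟩) ∧
      (∀ a : G, Q.al ⟨leftCoset G0 a N, a, rfl⟩ =
          ⟨leftCoset G0 (G0.al a) N, G0.al a, rfl⟩) ∧
      Q.one = ⟨leftCoset G0 G0.one N, G0.one, rfl⟩ ∧
      leftCoset G0 G0.one N = N := by
  refine ⟨fun a b c d h1 h2 => HQAux.coset_op_congr G0 hN hnorm h1 h2,
    fun a b h => HQAux.coset_al_congr G0 hN h,
    HQAux.Qgroup G0 hN hnorm,
    fun a b => HQAux.qop_pi G0 hN hnorm a b,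
    fun a => HQAux.qal_pi G0 hN a,
    rfl,
    HQAux.one_coset G0 hN⟩
end

section
/- (Fundamental theorem of homomorphisms for Hom-groups) If f: (G, α) → (H, β) is a surjective homomorphism of Hom-groups, then G/Ker f is isomorphic to H as Hom-groups, via the map xKer f ↦ f(x). -/
section Aux

variable {G : Type*} (G0 : HomGroup G)

theorem HomGroup.cancel_left (x y z : G) (h : G0.op x y = G0.op x z) : y = z := by
  have h1 : G0.op (G0.al (G0.inv x)) (G0.op x y)
      = G0.op (G0.al (G0.inv x)) (G0.op x z) := by rw [h]
  rw [G0.assoc, G0.assoc, G0.inv_op, G0.one_op, G0.one_op] at h1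
  exact G0.al_bij.1 (G0.al_bij.1 h1)

theorem HomGroup.al_one : G0.al G0.one = G0.one := by
  apply G0.cancel_left (G0.al G0.one)
  have h1 : G0.al (G0.op G0.one G0.one) = G0.op (G0.al G0.one) (G0.al G0.one) :=
    G0.al_op _ _
  rw [G0.op_one G0.one] at h1
  rw [← h1, G0.op_one]

variable {H : Type*} (H0 : HomGroup H) (f : G → H)
  (hf : ∀ g k : G, f (G0.op g k) = H0.op (f g) (f k))
  (hfa : ∀ g : G, H0.al (f g) = f (G0.al g))

include hf hfa

theorem HomGroup.f_one : f G0.one = H0.one := by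
  apply H0.cancel_left (f G0.one)
  have h1 : H0.op (f G0.one) (f G0.one) = f (G0.op G0.one G0.one) := (hf _ _).symm
  rw [G0.op_one, G0.al_one] at h1
  rw [h1, H0.op_one, hfa, G0.al_one]

theorem HomGroup.coset_char (a : G) :
    leftCoset G0 a {g : G | f g = H0.one} = {x | f x = H0.al (f a)} := by
  ext x
  constructor
  · rintro ⟨h, hh, rfl⟩
    simp only [Set.mem_setOf_eq] at hh ⊢
    rw [hf, hh, H0.op_one]
  · intro hx
    simp only [Set.mem_setOf_eq] at hx
    set A := Equiv.ofBijective G0.al G0.al_bij with hA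
    have hAa : ∀ y, G0.al (A.symm y) = y := fun y => A.apply_symm_apply y
    refine ⟨A.symm (A.symm (G0.op (G0.al (G0.inv a)) x)), ?_, ?_⟩
    · -- f h = 1
      simp only [Set.mem_setOf_eq]
      apply H0.al_bij.1; apply H0.al_bij.1
      rw [hfa, hfa, hAa, hAa, hf, ← hfa, hx, ← H0.al_op, ← hf, G0.inv_op,
        HomGroup.f_one G0 H0 f hf hfa, H0.al_one, H0.al_one]
    · -- x = a · h
      apply G0.al_bij.1; apply G0.al_bij.1
      rw [G0.al_op, G0.al_op, hAa, hAa, G0.assoc, ← G0.al_op, G0.op_inv, G0.al_one,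
        G0.one_op]

theorem HomGroup.coset_eq_iff (a b : G) :
    leftCoset G0 a {g : G | f g = H0.one} = leftCoset G0 b {g : G | f g = H0.one}
      ↔ f a = f b := by
  rw [HomGroup.coset_char G0 H0 f hf hfa a, HomGroup.coset_char G0 H0 f hf hfa b]
  constructor
  · intro h
    have hmem : G0.al a ∈ {x | f x = H0.al (f a)} := by
      simp only [Set.mem_setOf_eq, hfa]
    rw [h] at hmem
    simp only [Set.mem_setOf_eq] at hmem
    rw [← hfa] at hmem
    exact H0.al_bij.1 hmem
  · intro h; rw [h]

end Aux

/-- Fundamental theorem of homomorphisms of Hom-groups: if `f : G → H` is a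
surjective homomorphism of Hom-groups then `G/Ker f ≅ H` via `x·Ker f ↦ f x`. -/
theorem homGroup_first_fundamental {G H : Type*} (G0 : HomGroup G) (H0 : HomGroup H)
    (f : G → H) (hf : ∀ g k : G, f (G0.op g k) = H0.op (f g) (f k))
    (hfa : ∀ g : G, H0.al (f g) = f (G0.al g)) (hsurj : Function.Surjective f) :
    ∃ Q : HomGroup {T : Set G // ∃ a : G, T = leftCoset G0 a {g : G | f g = H0.one}},
      (∀ a b : G,
        Q.op ⟨leftCoset G0 a {g : G | f g = H0.one}, a, rfl⟩
            ⟨leftCoset G0 b {g : G | f g = H0.one}, b, rfl⟩ =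
          ⟨leftCoset G0 (G0.op a b) {g : G | f g = H0.one}, G0.op a b, rfl⟩) ∧
      (∀ a : G, Q.al ⟨leftCoset G0 a {g : G | f g = H0.one}, a, rfl⟩ =
          ⟨leftCoset G0 (G0.al a) {g : G | f g = H0.one}, G0.al a, rfl⟩) ∧
      ∃ φ : {T : Set G // ∃ a : G, T = leftCoset G0 a {g : G | f g = H0.one}} → H,
        Function.Bijective φ ∧
        (∀ x y, φ (Q.op x y) = H0.op (φ x) (φ y)) ∧
        (∀ x, φ (Q.al x) = H0.al (φ x)) ∧
        ∀ x : G, φ ⟨leftCoset G0 x {g : G | f g = H0.one}, x, rfl⟩ = f x := by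
  set N := {g : G | f g = H0.one} with hN
  have ceq := HomGroup.coset_eq_iff G0 H0 f hf hfa
  set K := {T : Set G // ∃ a : G, T = leftCoset G0 a N} with hK
  let φ0 : K → H := fun x => f x.2.choose
  have key : ∀ a : G, φ0 ⟨leftCoset G0 a N, a, rfl⟩ = f a := by
    intro a
    have hspec := (⟨leftCoset G0 a N, a, rfl⟩ : K).2.choose_spec
    exact ((ceq _ _).mp hspec.symm)
  have hinj : Function.Injective φ0 := by
    intro x y hxy
    apply Subtype.ext
    rw [x.2.choose_spec, y.2.choose_spec]
    exact (ceq _ _).mpr hxy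
  have hsur : Function.Surjective φ0 := by
    intro h
    obtain ⟨a, ha⟩ := hsurj h
    exact ⟨⟨leftCoset G0 a N, a, rfl⟩, (key a).trans ha⟩
  set e := Equiv.ofBijective φ0 ⟨hinj, hsur⟩ with he
  have hee : ∀ x : K, e x = φ0 x := fun _ => rfl
  refine ⟨{ op := fun x y => e.symm (H0.op (e x) (e y))
            al := fun x => e.symm (H0.al (e x))
            one := e.symm H0.one
            inv := fun x => e.symm (H0.inv (e x))
            al_bij := (e.symm.bijective.comp H0.al_bij).comp e.bijective
            al_op := by intro g h; simp only [Equiv.apply_symm_apply, H0.al_op]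
            assoc := by intro g h k; simp only [Equiv.apply_symm_apply, H0.assoc]
            op_one := by intro g; simp only [Equiv.apply_symm_apply, H0.op_one]
            one_op := by intro g; simp only [Equiv.apply_symm_apply, H0.one_op]
            op_inv := by intro g; simp only [Equiv.apply_symm_apply, H0.op_inv]
            inv_op := by intro g; simp only [Equiv.apply_symm_apply, H0.inv_op] },
    ?_, ?_, e, e.bijective, ?_, ?_, ?_⟩
  · intro a b
    apply e.injective
    simp only [Equiv.apply_symm_apply]
    rw [hee, hee, hee, key, key, key, hf]
  · intro a
    apply e.injective
    simp only [Equiv.apply_symm_apply]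
    rw [hee, hee, key, key, hfa]
  · intro x y; simp only [Equiv.apply_symm_apply]
  · intro x; simp only [Equiv.apply_symm_apply]
  · intro x; rw [hee, key]
end
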